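/- arXiv:2603.22831 — 6 statements merged into one kernel-verified Lean document; each statement's English description precedes it below -/
import Mathlib

section
/- If h ≤ 2Σ_low² / max(2r − Σ_low², Σ_high² − 2r) (with the right side interpreted as +∞ when the max is ≤ 0), then for every Σ ∈ [Σ_low, Σ_high] both off-diagonal coefficients of the explicit scheme are nonnegative: r/(2h) + Σ²/(2h²) − Σ²/(4h) ≥ 0 and Σ²/(2h²) − r/(2h) + Σ²/(4h) ≥ 0. -/
theorem explicit_offdiag_coeff_nonneg
    (r Sl Sh h : ℝ) (hr : 0 ≤ r) (hl : 0 < Sl) (hlh : Sl ≤ Sh) (hh : 0 < h)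
    (hmesh : h * max (2*r - Sl^2) (Sh^2 - 2*r) ≤ 2 * Sl^2) :
    ∀ S ∈ Set.Icc Sl Sh,
      r/(2*h) + S^2/(2*h^2) - S^2/(4*h) ≥ 0 ∧
      S^2/(2*h^2) - r/(2*h) + S^2/(4*h) ≥ 0 := by
  intro S hS
  obtain ⟨h1, h2⟩ := hS
  have hSl2 : Sl^2 ≤ S^2 := by nlinarith
  have hSh2 : S^2 ≤ Sh^2 := by nlinarith
  have hm1 : h * (2*r - Sl^2) ≤ 2 * Sl^2 :=
    le_trans (mul_le_mul_of_nonneg_left (le_max_left _ _) hh.le) hmesh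
  have hm2 : h * (Sh^2 - 2*r) ≤ 2 * Sl^2 :=
    le_trans (mul_le_mul_of_nonneg_left (le_max_right _ _) hh.le) hmesh
  have hh2 : (0:ℝ) < h^2 := by positivity
  constructor
  · have key : 0 ≤ 2*r*h + 2*S^2 - S^2*h := by nlinarith
    have : r/(2*h) + S^2/(2*h^2) - S^2/(4*h) = (2*r*h + 2*S^2 - S^2*h) / (4*h^2) := by
      field_simp; ring
    rw [ge_iff_le, this]; exact div_nonneg key (by positivity)
  · have key : 0 ≤ 2*S^2 - 2*r*h + S^2*h := by nlinarith
    have : S^2/(2*h^2) - r/(2*h) + S^2/(4*h) = (2*S^2 - 2*r*h + S^2*h) / (4*h^2) := by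
      field_simp; ring
    rw [ge_iff_le, this]; exact div_nonneg key (by positivity)
end

section
/- Under the stability condition Σ_high√Δt ≤ h ≤ 2Σ_low²/max(2r − Σ_low², Σ_high² − 2r), the explicit finite difference scheme for the G-Black–Scholes equation satisfies the discrete maximum bound: for all n, ‖V^n‖_∞ ≤ max(‖φ‖_∞, max_m |φ^m_boundary|), where V^0 = φ is the initial data and φ^m_boundary are the prescribed right-boundary values. -/
set_option maxHeartbeats 1000000


theorem explicit_scheme_max_bound
    (r Sl Sh Δt h L T : ℝ) (M N : ℕ)
    (hr : 0 ≤ r) (hl : 0 < Sl) (hlh : Sl ≤ Sh)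
    (hM : 0 < M) (hN : 0 < N) (hL : 0 < L) (hT : 0 < T)
    (hh : h = 2*L/M) (hΔt : Δt = T/N)
    (hmesh1 : Sh * Real.sqrt Δt ≤ h)
    (hmesh2 : h * max (2*r - Sl^2) (Sh^2 - 2*r) ≤ 2 * Sl^2)
    (V : ℕ → ℕ → ℝ) (φb : ℕ → ℝ)
    (hscheme : ∀ n < N, ∀ i, 0 < i → i < M →
      V (n+1) i =
        (1/(1 + r*Δt)) *
          ((Δt/(2*h)) * ((if 0 ≤ (V n (i+1) - 2*V n i + V n (i-1))/h^2
                              - (V n (i+1) - V n (i-1))/(2*h)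
                          then Sh else Sl)^2/h
                        + (if 0 ≤ (V n (i+1) - 2*V n i + V n (i-1))/h^2
                              - (V n (i+1) - V n (i-1))/(2*h)
                          then Sh else Sl)^2/2 - r) * V n (i-1)
          + (1 - (if 0 ≤ (V n (i+1) - 2*V n i + V n (i-1))/h^2
                      - (V n (i+1) - V n (i-1))/(2*h)
                  then Sh else Sl)^2 * Δt / h^2) * V n i
          + (Δt/(2*h)) * (r + (if 0 ≤ (V n (i+1) - 2*V n i + V n (i-1))/h^2
                                  - (V n (i+1) - V n (i-1))/(2*h)
                              then Sh else Sl)^2/h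
                            - (if 0 ≤ (V n (i+1) - 2*V n i + V n (i-1))/h^2
                                  - (V n (i+1) - V n (i-1))/(2*h)
                              then Sh else Sl)^2/2) * V n (i+1)))
    (hleft : ∀ n < N, V (n+1) 0 = V n 0 / (1 + r*Δt))
    (hright : ∀ n < N, V (n+1) M = φb (n+1)) :
    ∀ n ≤ N, ∀ i ≤ M,
      |V n i| ≤ max ((Finset.range (M+1)).sup' (by simp) (fun j => |V 0 j|))
                    ((Finset.range (N+1)).sup' (by simp) (fun m => |φb m|)) := by

  have hΔt0 : 0 < Δt := by rw [hΔt]; positivity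
  have hh0 : 0 < h := by rw [hh]; positivity
  have hden : (1:ℝ) ≤ 1 + r*Δt := by nlinarith
  intro n
  induction n with
  | zero =>
    intro _ i hi
    exact le_trans (Finset.le_sup' (fun j => |V 0 j|)
      (Finset.mem_range.mpr (Nat.lt_succ_of_le hi))) (le_max_left _ _)
  | succ n ih =>
    intro hn i hi
    have hnN : n < N := hn
    have hBn : ∀ j, j ≤ M → |V n j| ≤ _ := ih (le_of_lt hnN)
    rcases Nat.eq_zero_or_pos i with hi0 | hi0
    · subst hi0
      rw [hleft n hnN, abs_div, abs_of_pos (by linarith : (0:ℝ) < 1 + r*Δt)]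
      exact le_trans (div_le_self (abs_nonneg _) hden) (hBn 0 (Nat.zero_le _))
    · rcases eq_or_lt_of_le hi with hiM | hiM
      · subst hiM
        rw [hright n hnN]
        exact le_trans (Finset.le_sup' (fun m => |φb m|)
          (Finset.mem_range.mpr (by omega))) (le_max_right _ _)
      · rw [hscheme n hnN i hi0 hiM]
        set s := (if 0 ≤ (V n (i+1) - 2*V n i + V n (i-1))/h^2
                      - (V n (i+1) - V n (i-1))/(2*h)
                  then Sh else Sl) with hs_def
        have hsl : Sl ≤ s := by rw [hs_def]; split_ifs <;> [exact hlh; exact le_rfl]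
        have hsh : s ≤ Sh := by rw [hs_def]; split_ifs <;> [exact le_rfl; exact hlh]
        clear_value s
        clear hs_def hscheme hleft hright ih
        have hs0 : 0 < s := lt_of_lt_of_le hl hsl
        have hsl2 : Sl^2 ≤ s^2 := by nlinarith
        have hsh2 : s^2 ≤ Sh^2 := by nlinarith
        have hmA : h*(2*r - Sl^2) ≤ 2*Sl^2 :=
          le_trans (mul_le_mul_of_nonneg_left (le_max_left _ _) hh0.le) hmesh2
        have hmB : h*(Sh^2 - 2*r) ≤ 2*Sl^2 :=
          le_trans (mul_le_mul_of_nonneg_left (le_max_right _ _) hh0.le) hmesh2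
        have hc1 : 0 ≤ Δt/(2*h) * (s^2/h + s^2/2 - r) := by
          apply mul_nonneg (by positivity)
          have hnum : 0 ≤ 2*s^2 + h*s^2 - 2*h*r := by nlinarith
          have heq : (2*s^2 + h*s^2 - 2*h*r)/(2*h) = s^2/h + s^2/2 - r := by
            field_simp
          rw [← heq]
          exact div_nonneg hnum (by positivity)
        have hc3 : 0 ≤ Δt/(2*h) * (r + s^2/h - s^2/2) := by
          apply mul_nonneg (by positivity)
          have hnum : 0 ≤ 2*h*r + 2*s^2 - h*s^2 := by nlinarith
          have heq : (2*h*r + 2*s^2 - h*s^2)/(2*h) = r + s^2/h - s^2/2 := by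
            field_simp
          rw [← heq]
          exact div_nonneg hnum (by positivity)
        have hsq : Sh^2 * Δt ≤ h^2 := by
          have h1 : 0 ≤ Sh * Real.sqrt Δt :=
            mul_nonneg (le_trans hl.le hlh) (Real.sqrt_nonneg _)
          have h2 : (Sh * Real.sqrt Δt)^2 ≤ h^2 := by
            apply pow_le_pow_left₀ h1 hmesh1
          rwa [mul_pow, Real.sq_sqrt hΔt0.le] at h2
        have hc2 : 0 ≤ 1 - s^2 * Δt / h^2 := by
          have : s^2 * Δt / h^2 ≤ 1 := by
            rw [div_le_one (by positivity)]
            nlinarith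
          linarith
        have hsum : Δt/(2*h) * (s^2/h + s^2/2 - r) + (1 - s^2 * Δt / h^2)
            + Δt/(2*h) * (r + s^2/h - s^2/2) = 1 := by
          field_simp; ring
        set B := max ((Finset.range (M+1)).sup' (by simp) (fun j => |V 0 j|))
                     ((Finset.range (N+1)).sup' (by simp) (fun m => |φb m|)) with hBdef
        have hm1 : |V n (i-1)| ≤ B := hBn (i-1) (by omega)
        have hm2 : |V n i| ≤ B := hBn i hi
        have hm3 : |V n (i+1)| ≤ B := hBn (i+1) (by omega)
        have hB0 : 0 ≤ B := le_trans (abs_nonneg _) hm2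
        have key : |Δt/(2*h) * (s^2/h + s^2/2 - r) * V n (i-1)
            + (1 - s^2 * Δt / h^2) * V n i
            + Δt/(2*h) * (r + s^2/h - s^2/2) * V n (i+1)| ≤ B := by
          calc |Δt/(2*h) * (s^2/h + s^2/2 - r) * V n (i-1)
              + (1 - s^2 * Δt / h^2) * V n i
              + Δt/(2*h) * (r + s^2/h - s^2/2) * V n (i+1)|
              ≤ |Δt/(2*h) * (s^2/h + s^2/2 - r) * V n (i-1)|
                + |(1 - s^2 * Δt / h^2) * V n i|
                + |Δt/(2*h) * (r + s^2/h - s^2/2) * V n (i+1)| := by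
                  exact le_trans (abs_add_le _ _) (by gcongr; exact abs_add_le _ _)
            _ ≤ Δt/(2*h) * (s^2/h + s^2/2 - r) * B
                + (1 - s^2 * Δt / h^2) * B
                + Δt/(2*h) * (r + s^2/h - s^2/2) * B := by
                  have e1 : |Δt/(2*h) * (s^2/h + s^2/2 - r) * V n (i-1)|
                      ≤ Δt/(2*h) * (s^2/h + s^2/2 - r) * B := by
                    rw [abs_mul, abs_of_nonneg hc1]
                    exact mul_le_mul_of_nonneg_left hm1 hc1
                  have e2 : |(1 - s^2 * Δt / h^2) * V n i|
                      ≤ (1 - s^2 * Δt / h^2) * B := by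
                    rw [abs_mul, abs_of_nonneg hc2]
                    exact mul_le_mul_of_nonneg_left hm2 hc2
                  have e3 : |Δt/(2*h) * (r + s^2/h - s^2/2) * V n (i+1)|
                      ≤ Δt/(2*h) * (r + s^2/h - s^2/2) * B := by
                    rw [abs_mul, abs_of_nonneg hc3]
                    exact mul_le_mul_of_nonneg_left hm3 hc3
                  exact add_le_add (add_le_add e1 e2) e3
            _ = B := by rw [← add_mul, ← add_mul, hsum, one_mul]
        calc |1/(1 + r*Δt) * (Δt/(2*h) * (s^2/h + s^2/2 - r) * V n (i-1)
              + (1 - s^2 * Δt / h^2) * V n i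
              + Δt/(2*h) * (r + s^2/h - s^2/2) * V n (i+1))|
            = 1/(1 + r*Δt) * |Δt/(2*h) * (s^2/h + s^2/2 - r) * V n (i-1)
              + (1 - s^2 * Δt / h^2) * V n i
              + Δt/(2*h) * (r + s^2/h - s^2/2) * V n (i+1)| := by
                rw [abs_mul, abs_of_nonneg (by positivity : (0:ℝ) ≤ 1/(1 + r*Δt))]
          _ ≤ 1 * B := by
                apply mul_le_mul _ key (abs_nonneg _) zero_le_one
                rw [div_le_one (by linarith)]; linarith
          _ = B := one_mul B
end

section
/- For the nonlinear explicit scheme with upwind-selected volatility, increasing the data at time level n cannot decrease the solution at time n+1: if Ṽ_j^n = V_j^n + ε_j with ε_j ≥ 0 for j ∈ {i−1, i, i+1}, then under the stability condition Σ_high√Δt ≤ h ≤ 2Σ_low²/max(2r − Σ_low², Σ_high² − 2r), the updated value G(Ṽ_{i−1}^n, Ṽ_i^n, Ṽ_{i+1}^n) ≥ G(V_{i−1}^n, V_i^n, V_{i+1}^n), where G(v₋, v₀, v₊) = (1/(1+rΔt))[v₀ + Δt(r·δ_h + F(δ_h² − δ_h))] with F(q) = (1/2)max(Σ_low²q, Σ_high²q),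 δ_h = (v₊ − v₋)/(2h), δ_h² = (v₊ − 2v₀ + v₋)/h². -/
set_option maxHeartbeats 1000000 in
theorem explicit_scheme_monotone
    (r Sl Sh Δt h : ℝ) (hr : 0 ≤ r) (hl : 0 < Sl) (hlh : Sl ≤ Sh)
    (hΔt : 0 < Δt) (hh : 0 < h)
    (hmesh1 : Sh * Real.sqrt Δt ≤ h)
    (hmesh2 : h * max (2*r - Sl^2) (Sh^2 - 2*r) ≤ 2 * Sl^2)
    (F : ℝ → ℝ) (hF : ∀ q, F q = (1/2) * max (Sl^2 * q) (Sh^2 * q))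
    (G : ℝ → ℝ → ℝ → ℝ)
    (hG : ∀ vm v0 vp, G vm v0 vp =
      (1/(1 + r*Δt)) * (v0 + Δt * (r * ((vp - vm)/(2*h))
        + F ((vp - 2*v0 + vm)/h^2 - (vp - vm)/(2*h))))) :
    ∀ vm v0 vp εm ε0 εp : ℝ, 0 ≤ εm → 0 ≤ ε0 → 0 ≤ εp →
      G vm v0 vp ≤ G (vm + εm) (v0 + ε0) (vp + εp) := by
  intro vm v0 vp εm ε0 εp hεm hε0 hεp
  have hSl2 : (0:ℝ) < Sl^2 := by positivity
  have hSh : (0:ℝ) < Sh := lt_of_lt_of_le hl hlh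
  have hSh2 : Sl^2 ≤ Sh^2 := by nlinarith
  have hc : (0:ℝ) ≤ 1/(1 + r*Δt) := by positivity
  -- key Lipschitz-type bound for F
  have hFd : ∀ q d : ℝ, F q + (1/2) * min (Sl^2*d) (Sh^2*d) ≤ F (q+d) := by
    intro q d
    rw [hF, hF]
    have key : max (Sl^2*q) (Sh^2*q) + min (Sl^2*d) (Sh^2*d)
        ≤ max (Sl^2*(q+d)) (Sh^2*(q+d)) := by
      rcases max_cases (Sl^2*q) (Sh^2*q) with ⟨he, _⟩ | ⟨he, _⟩
      · rw [he]
        refine le_trans ?_ (le_max_left _ _)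
        have := min_le_left (Sl^2*d) (Sh^2*d)
        nlinarith
      · rw [he]
        refine le_trans ?_ (le_max_right _ _)
        have := min_le_right (Sl^2*d) (Sh^2*d)
        nlinarith
    linarith
  -- stability facts
  have hST : Sh^2 * Δt ≤ h^2 := by
    have h1 : (0:ℝ) ≤ Sh * Real.sqrt Δt := by positivity
    have h2 := Real.sq_sqrt hΔt.le
    nlinarith [Real.sqrt_nonneg Δt]
  have hA : h * (2*r - Sl^2) ≤ 2 * Sl^2 :=
    le_trans (mul_le_mul_of_nonneg_left (le_max_left _ _) hh.le) hmesh2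
  have hB : h * (Sh^2 - 2*r) ≤ 2 * Sh^2 := by
    have := le_trans (mul_le_mul_of_nonneg_left (le_max_right _ _) hh.le) hmesh2
    linarith
  have step1 : G vm v0 vp ≤ G (vm + εm) v0 vp := by
    rw [hG, hG]
    apply mul_le_mul_of_nonneg_left _ hc
    set q := (vp - 2*v0 + vm)/h^2 - (vp - vm)/(2*h) with hq
    have hd : (vp - 2*v0 + (vm + εm))/h^2 - (vp - (vm + εm))/(2*h)
        = q + (εm/h^2 + εm/(2*h)) := by rw [hq]; field_simp; ring
    rw [hd]
    set d := εm/h^2 + εm/(2*h) with hdd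
    have hd0 : 0 ≤ d := by positivity
    have hmin : min (Sl^2*d) (Sh^2*d) = Sl^2*d :=
      min_eq_left (mul_le_mul_of_nonneg_right hSh2 hd0)
    have hFq := hFd q d
    rw [hmin] at hFq
    have key : r * ((vp - (vm+εm))/(2*h)) + (1/2) * (Sl^2*d) - r * ((vp - vm)/(2*h))
        = εm * (Sl^2*(2+h) - 2*r*h) / (4*h^2) := by
      rw [hdd]; field_simp; ring
    have key2 : (0:ℝ) ≤ εm * (Sl^2*(2+h) - 2*r*h) / (4*h^2) := by
      apply div_nonneg _ (by positivity)
      apply mul_nonneg hεm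
      nlinarith
    have hsum : r * ((vp - vm)/(2*h)) + F q
        ≤ r * ((vp - (vm+εm))/(2*h)) + F (q + d) := by linarith
    have := mul_le_mul_of_nonneg_left hsum hΔt.le
    linarith
  have step2 : G (vm + εm) v0 vp ≤ G (vm + εm) (v0 + ε0) vp := by
    rw [hG, hG]
    apply mul_le_mul_of_nonneg_left _ hc
    set q := (vp - 2*v0 + (vm+εm))/h^2 - (vp - (vm+εm))/(2*h) with hq
    have hd : (vp - 2*(v0+ε0) + (vm + εm))/h^2 - (vp - (vm + εm))/(2*h)
        = q + (-(2*ε0)/h^2) := by rw [hq]; field_simp; ring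
    rw [hd]
    set d := -(2*ε0)/h^2 with hdd
    have hd0 : d ≤ 0 := by
      rw [hdd]; apply div_nonpos_of_nonpos_of_nonneg (by linarith) (by positivity)
    have hmin : min (Sl^2*d) (Sh^2*d) = Sh^2*d := by
      apply min_eq_right; nlinarith
    have hFq := hFd q d
    rw [hmin] at hFq
    have key : Δt * (-(1/2) * (Sh^2*d)) = Δt * Sh^2 * ε0 / h^2 := by
      rw [hdd]; field_simp
    have key2 : Δt * Sh^2 * ε0 / h^2 ≤ ε0 := by
      rw [div_le_iff₀ (by positivity)]
      nlinarith [mul_le_mul_of_nonneg_right hST hε0]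
    have := mul_le_mul_of_nonneg_left hFq hΔt.le
    nlinarith
  have step3 : G (vm + εm) (v0 + ε0) vp ≤ G (vm + εm) (v0 + ε0) (vp + εp) := by
    rw [hG, hG]
    apply mul_le_mul_of_nonneg_left _ hc
    set q := (vp - 2*(v0+ε0) + (vm+εm))/h^2 - (vp - (vm+εm))/(2*h) with hq
    have hd : ((vp+εp) - 2*(v0+ε0) + (vm + εm))/h^2 - ((vp+εp) - (vm + εm))/(2*h)
        = q + (εp/h^2 - εp/(2*h)) := by rw [hq]; field_simp; ring
    rw [hd]
    set d := εp/h^2 - εp/(2*h) with hdd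
    have hFq := hFd q d
    have hrε : r * ((vp - (vm+εm))/(2*h)) ≤
        r * (((vp+εp) - (vm+εm))/(2*h)) + (1/2) * min (Sl^2*d) (Sh^2*d) := by
      rcases le_total 0 d with hd0 | hd0
      · have h1 : 0 ≤ min (Sl^2*d) (Sh^2*d) := le_min (by positivity) (by positivity)
        have h2 : r * ((vp - (vm+εm))/(2*h)) ≤ r * (((vp+εp) - (vm+εm))/(2*h)) := by
          apply mul_le_mul_of_nonneg_left _ hr
          apply div_le_div_of_nonneg_right _ (by positivity)
          · linarith
        linarith
      · have hmin : min (Sl^2*d) (Sh^2*d) = Sh^2*d := by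
          apply min_eq_right; nlinarith
        rw [hmin]
        have key : r * (((vp+εp) - (vm+εm))/(2*h)) + (1/2) * (Sh^2*d)
            - r * ((vp - (vm+εm))/(2*h)) = εp * (2*r*h + Sh^2*(2-h)) / (4*h^2) := by
          rw [hdd]; field_simp; ring
        have key2 : (0:ℝ) ≤ εp * (2*r*h + Sh^2*(2-h)) / (4*h^2) := by
          apply div_nonneg _ (by positivity)
          apply mul_nonneg hεp
          nlinarith
        linarith
    have hsum : r * ((vp - (vm+εm))/(2*h)) + F q
        ≤ r * (((vp+εp) - (vm+εm))/(2*h)) + F (q + d) := by linarith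
    have := mul_le_mul_of_nonneg_left hsum hΔt.le
    linarith
  exact le_trans step1 (le_trans step2 step3)
end

section
/- The tridiagonal matrix A of the implicit scheme is strictly diagonally dominant with positive diagonal and nonpositive off-diagonal entries (an M-matrix): with a_{ii} = 1/Δt + r + Σ²/h², a_{i,i+1} = −(r/(2h) + Σ²/(2h²) − Σ²/(4h)), a_{i,i−1} = −(Σ²/(2h²) − r/(2h) + Σ²/(4h)), if h ≤ 2Σ_low²/max(2r − Σ_low², Σ_high² − 2r) and Σ ∈ [Σ_low, Σ_high], then a_{ii} > 0, a_{i,i±1} ≤ 0, and |a_{i,i−1}| + |a_{i,i+1}| < a_{ii}. -/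
theorem implicit_M_matrix
    (r Δt h Sl Sh S : ℝ) (hr : 0 ≤ r) (hΔt : 0 < Δt) (hh : 0 < h)
    (hl : 0 < Sl) (hlh : Sl ≤ Sh) (hS : S ∈ Set.Icc Sl Sh)
    (hmesh : h * max (2*r - Sl^2) (Sh^2 - 2*r) ≤ 2 * Sl^2)
    (aii aip aim : ℝ)
    (hii : aii = 1/Δt + r + S^2/h^2)
    (hip : aip = -(r/(2*h) + S^2/(2*h^2) - S^2/(4*h)))
    (him : aim = -(S^2/(2*h^2) - r/(2*h) + S^2/(4*h))) :
    0 < aii ∧ aip ≤ 0 ∧ aim ≤ 0 ∧ |aim| + |aip| < aii := by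
  obtain ⟨hSl, hSh⟩ := hS
  have hS0 : 0 < S := lt_of_lt_of_le hl hSl
  have h1 : 2*r - Sl^2 ≤ max (2*r - Sl^2) (Sh^2 - 2*r) := le_max_left _ _
  have h2 : Sh^2 - 2*r ≤ max (2*r - Sl^2) (Sh^2 - 2*r) := le_max_right _ _
  have hm1 : h * (2*r - Sl^2) ≤ 2 * Sl^2 :=
    le_trans (by nlinarith) hmesh
  have hm2 : h * (Sh^2 - 2*r) ≤ 2 * Sl^2 :=
    le_trans (by nlinarith) hmesh
  have hSl2 : Sl^2 ≤ S^2 := by nlinarith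
  have hS2h : S^2 ≤ Sh^2 := by nlinarith
  have key1 : h*(S^2 - 2*r) ≤ 2*S^2 := by nlinarith [mul_le_mul_of_nonneg_left hS2h hh.le]
  have key2 : h*(2*r - S^2) ≤ 2*S^2 := by nlinarith [mul_le_mul_of_nonneg_left hSl2 hh.le]
  have hip' : aip ≤ 0 := by
    rw [hip]
    have : 0 ≤ r/(2*h) + S^2/(2*h^2) - S^2/(4*h) := by
      rw [div_add_div _ _ (by positivity) (by positivity), div_sub_div _ _ (by positivity) (by positivity)]
      apply div_nonneg _ (by positivity)
      nlinarith [mul_le_mul_of_nonneg_left key1 (sq_nonneg h)]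
    linarith
  have him' : aim ≤ 0 := by
    rw [him]
    have : 0 ≤ S^2/(2*h^2) - r/(2*h) + S^2/(4*h) := by
      rw [div_sub_div _ _ (by positivity) (by positivity), div_add_div _ _ (by positivity) (by positivity)]
      apply div_nonneg _ (by positivity)
      nlinarith [mul_le_mul_of_nonneg_left key2 (sq_nonneg h)]
    linarith
  have hii' : 0 < aii := by rw [hii]; positivity
  refine ⟨hii', hip', him', ?_⟩
  rw [abs_of_nonpos him', abs_of_nonpos hip', hii, hip, him]
  have : 0 < 1/Δt := by positivity
  have hhe : S^2/(2*h^2) + S^2/(2*h^2) = S^2/h^2 := by ring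
  linarith
end

section
/- Discrete maximum principle: Let W ∈ ℝ^{M+1} satisfy W_0 ≥ 0, W_M ≥ 0, and for 0 < i < M, (1/Δt + r)W_i − r(W_{i+1}−W_{i−1})/(2h) − (Σ²/2)[(W_{i+1}−2W_i+W_{i−1})/h² − (W_{i+1}−W_{i−1})/(2h)] ≥ 0, where the coefficients satisfy the M-matrix conditions (nonnegative off-diagonal weights). Then W_i ≥ 0 for all i. -/
theorem discrete_maximum_principle
    (r Δt h S : ℝ) (M : ℕ) (hr : 0 ≤ r) (hΔt : 0 < Δt) (hh : 0 < h)
    (hS : 0 < S) (hM : 2 ≤ M)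
    (hc1 : r/(2*h) + S^2/(2*h^2) - S^2/(4*h) ≥ 0)
    (hc2 : S^2/(2*h^2) - r/(2*h) + S^2/(4*h) ≥ 0)
    (W : ℕ → ℝ) (h0 : 0 ≤ W 0) (hMb : 0 ≤ W M)
    (hint : ∀ i, 0 < i → i < M →
      (1/Δt + r) * W i - r * (W (i+1) - W (i-1))/(2*h)
        - (S^2/2) * ((W (i+1) - 2*W i + W (i-1))/h^2
            - (W (i+1) - W (i-1))/(2*h)) ≥ 0) :
    ∀ i ≤ M, 0 ≤ W i := by
  obtain ⟨i₀, hi₀mem, hi₀min⟩ :=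
    Finset.exists_min_image (Finset.range (M+1)) W ⟨0, by simp⟩
  have hmin : ∀ j ≤ M, W i₀ ≤ W j := fun j hj =>
    hi₀min j (Finset.mem_range.mpr (Nat.lt_succ_of_le hj))
  have hi₀le : i₀ ≤ M := Nat.lt_succ_iff.mp (Finset.mem_range.mp hi₀mem)
  have key : 0 ≤ W i₀ := by
    rcases Nat.eq_zero_or_pos i₀ with h1 | h1
    · rw [h1]; exact h0
    rcases eq_or_lt_of_le hi₀le with h2 | h2
    · rw [h2]; exact hMb
    · have hA := hint i₀ h1 h2
      have hW1 : W i₀ ≤ W (i₀+1) := hmin _ h2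
      have hW2 : W i₀ ≤ W (i₀-1) := hmin _ (le_trans (Nat.sub_le _ _) hi₀le)
      have p1 : 0 ≤ (r/(2*h) + S^2/(2*h^2) - S^2/(4*h)) * (W (i₀+1) - W i₀) :=
        mul_nonneg hc1 (by linarith)
      have p2 : 0 ≤ (S^2/(2*h^2) - r/(2*h) + S^2/(4*h)) * (W (i₀-1) - W i₀) :=
        mul_nonneg hc2 (by linarith)
      have hid : ((1/Δt + r) * W i₀ - r * (W (i₀+1) - W (i₀-1))/(2*h)
            - (S^2/2) * ((W (i₀+1) - 2*W i₀ + W (i₀-1))/h^2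
                - (W (i₀+1) - W (i₀-1))/(2*h)))
          + (r/(2*h) + S^2/(2*h^2) - S^2/(4*h)) * (W (i₀+1) - W i₀)
          + (S^2/(2*h^2) - r/(2*h) + S^2/(4*h)) * (W (i₀-1) - W i₀)
          = (1/Δt + r) * W i₀ := by ring
      have hpos : 0 < 1/Δt + r := by positivity
      nlinarith [mul_pos hpos hpos]
  intro i hi
  exact le_trans key (hmin i hi)
end

section
/- Monotone Picard iteration: under the M-matrix condition on h, the successive iterates of the inner iteration for the implicit scheme form a monotone nondecreasing sequence; precisely, if W^k = V^{k+1} − V^k satisfies the linear system A(Σ^k)W^k = [F(q^k) − (1/2)(Σ^{k−1})²·q^k] componentwise with zero boundary values, where F(q) − (1/2)Σ(q')²·q ≥ 0 whenever Σ(q') is the maximizer for q', then W^k ≥ 0 componentwise. -/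
/-!
Writing the interior rows of the implicit scheme as
`(1/Δt + r) Wᵢ + lᵢ (Wᵢ - Wᵢ₋₁) + uᵢ (Wᵢ - Wᵢ₊₁)`, the mesh condition on `h` makes the
off-diagonal weights `lᵢ, uᵢ` nonnegative (the M-matrix property). The right-hand side
`F(qᵢ) - ½ Σ(pᵢ)² qᵢ` is nonnegative because `F` is the maximum over both volatilities.
At a negative interior minimum of `W` the row would then be negative, so the discrete
minimum principle gives `W ≥ 0`.
-/

theorem nonneg_of_discrete_minimum_principle {M : ℕ} {W c l u : ℕ → ℝ}
    (hc : ∀ i, 0 < i → i < M → 0 < c i) (hl : ∀ i, 0 < i → i < M → 0 ≤ l i)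
    (hu : ∀ i, 0 < i → i < M → 0 ≤ u i)
    (hrow : ∀ i, 0 < i → i < M →
      0 ≤ c i * W i + l i * (W i - W (i - 1)) + u i * (W i - W (i + 1)))
    (hleft : 0 ≤ W 0) (hright : 0 ≤ W M) :
    ∀ i ≤ M, 0 ≤ W i := by
  obtain ⟨m, hm, hmin⟩ := Finset.exists_min_image (Finset.range (M + 1)) W
    ⟨0, Finset.mem_range.mpr M.succ_pos⟩
  have hmin' : ∀ i ≤ M, W m ≤ W i := fun i hi => hmin i (Finset.mem_range.mpr (by omega))
  suffices h0 : 0 ≤ W m from fun i hi => h0.trans (hmin' i hi)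
  by_contra! hneg
  have hm0 : 0 < m := Nat.pos_of_ne_zero (by rintro rfl; linarith)
  have hmM : m < M := lt_of_le_of_ne (by simpa [Nat.lt_succ_iff] using hm)
    (by rintro rfl; linarith)
  have hprev : W m - W (m - 1) ≤ 0 := by linarith [hmin' (m - 1) (by omega)]
  have hnext : W m - W (m + 1) ≤ 0 := by linarith [hmin' (m + 1) (by omega)]
  have := hrow m hm0 hmM
  nlinarith [mul_neg_of_pos_of_neg (hc m hm0 hmM) hneg,
    mul_nonpos_of_nonneg_of_nonpos (hl m hm0 hmM) hprev,
    mul_nonpos_of_nonneg_of_nonpos (hu m hm0 hmM) hnext]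

/-- `-lowerWeight r h s` and `-upperWeight r h s` are the sub- and super-diagonal entries of the
row of `A(s)`. -/
noncomputable def lowerWeight (r h s : ℝ) : ℝ := (s ^ 2 * (2 + h) - 2 * r * h) / (4 * h ^ 2)

noncomputable def upperWeight (r h s : ℝ) : ℝ := (s ^ 2 * (2 - h) + 2 * r * h) / (4 * h ^ 2)

theorem scheme_row_eq (r Δt h s x y z : ℝ) (hh : h ≠ 0) :
    (1 / Δt + r) * y - r * (z - x) / (2 * h)
        - (s ^ 2 / 2) * ((z - 2 * y + x) / h ^ 2 - (z - x) / (2 * h))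
      = (1 / Δt + r) * y + lowerWeight r h s * (y - x) + upperWeight r h s * (y - z) := by
  unfold lowerWeight upperWeight
  field_simp
  ring

section Weights

variable {r h s Sl Sh : ℝ} (hh : 0 < h) (hlo : Sl ^ 2 ≤ s ^ 2) (hhi : s ^ 2 ≤ Sh ^ 2)
  (hmesh : h * max (2 * r - Sl ^ 2) (Sh ^ 2 - 2 * r) ≤ 2 * Sl ^ 2)
include hh hlo hmesh

theorem lowerWeight_nonneg : 0 ≤ lowerWeight r h s := by
  have := mul_le_mul_of_nonneg_left (le_max_left (2 * r - Sl ^ 2) (Sh ^ 2 - 2 * r)) hh.le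
  exact div_nonneg (by nlinarith) (by positivity)

include hhi in
theorem upperWeight_nonneg : 0 ≤ upperWeight r h s := by
  have := mul_le_mul_of_nonneg_left (le_max_right (2 * r - Sl ^ 2) (Sh ^ 2 - 2 * r)) hh.le
  exact div_nonneg (by nlinarith) (by positivity)

end Weights

theorem picard_iteration_monotone_general
    (r Δt h Sl Sh : ℝ) (M : ℕ) (hr : 0 ≤ r) (hΔt : 0 < Δt) (hh : 0 < h)
    (hl : 0 < Sl) (hlh : Sl ≤ Sh)
    (hmesh : h * max (2*r - Sl^2) (Sh^2 - 2*r) ≤ 2 * Sl^2)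
    (F : ℝ → ℝ) (hF : ∀ q, F q = (1/2) * max (Sl^2 * q) (Sh^2 * q))
    (Ssel : ℝ → ℝ) (hSsel : ∀ q, Ssel q = if 0 ≤ q then Sh else Sl)
    (q p : ℕ → ℝ) (W : ℕ → ℝ)
    (hsys : ∀ i, 0 < i → i < M →
      (1/Δt + r) * W i - r * (W (i+1) - W (i-1))/(2*h)
        - ((Ssel (q i))^2/2) * ((W (i+1) - 2*W i + W (i-1))/h^2
            - (W (i+1) - W (i-1))/(2*h))
        = F (q i) - (1/2) * (Ssel (p i))^2 * q i)
    (hleft : W 0 = 0) (hright : W M = 0) :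
    ∀ i ≤ M, 0 ≤ W i := by
  have hsel : ∀ x, Ssel x = Sl ∨ Ssel x = Sh := fun x => by
    rw [hSsel]; split_ifs <;> simp
  have hsq : Sl ^ 2 ≤ Sh ^ 2 := pow_le_pow_left₀ hl.le hlh 2
  have hlo : ∀ x, Sl ^ 2 ≤ Ssel x ^ 2 := fun x => by rcases hsel x with e | e <;> simp [e, hsq]
  have hhi : ∀ x, Ssel x ^ 2 ≤ Sh ^ 2 := fun x => by rcases hsel x with e | e <;> simp [e, hsq]
  have hrhs : ∀ x y, 0 ≤ F x - (1/2) * Ssel y ^ 2 * x := fun x y => by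
    rw [hF]
    rcases hsel y with e | e <;> rw [e]
    · linarith [le_max_left (Sl ^ 2 * x) (Sh ^ 2 * x)]
    · linarith [le_max_right (Sl ^ 2 * x) (Sh ^ 2 * x)]
  refine nonneg_of_discrete_minimum_principle (c := fun _ => 1 / Δt + r)
    (l := fun i => lowerWeight r h (Ssel (q i))) (u := fun i => upperWeight r h (Ssel (q i)))
    (fun _ _ _ => by positivity) (fun i _ _ => lowerWeight_nonneg hh (hlo _) hmesh)
    (fun i _ _ => upperWeight_nonneg hh (hlo _) (hhi _) hmesh) (fun i hi hiM => ?_)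
    hleft.ge hright.ge
  have := hsys i hi hiM
  rw [scheme_row_eq _ _ _ _ _ _ _ hh.ne'] at this
  exact this ▸ hrhs _ _

theorem picard_iteration_monotone
    (r Δt h Sl Sh : ℝ) (M : ℕ) (hr : 0 ≤ r) (hΔt : 0 < Δt) (hh : 0 < h)
    (hl : 0 < Sl) (hlh : Sl ≤ Sh) (hM : 2 ≤ M)
    (hmesh : h * max (2*r - Sl^2) (Sh^2 - 2*r) ≤ 2 * Sl^2)
    (F : ℝ → ℝ) (hF : ∀ q, F q = (1/2) * max (Sl^2 * q) (Sh^2 * q))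
    (Ssel : ℝ → ℝ) (hSsel : ∀ q, Ssel q = if 0 ≤ q then Sh else Sl)
    (q p : ℕ → ℝ) (W : ℕ → ℝ)
    (hsys : ∀ i, 0 < i → i < M →
      (1/Δt + r) * W i - r * (W (i+1) - W (i-1))/(2*h)
        - ((Ssel (q i))^2/2) * ((W (i+1) - 2*W i + W (i-1))/h^2
            - (W (i+1) - W (i-1))/(2*h))
        = F (q i) - (1/2) * (Ssel (p i))^2 * q i)
    (hleft : W 0 = 0) (hright : W M = 0) :
    ∀ i ≤ M, 0 ≤ W i :=
  picard_iteration_monotone_general r Δt h Sl Sh M hr hΔt hh hl hlh hmesh F hF Ssel hSsel q p W hsys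
    hleft hright
end
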